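/- arXiv:2503.15375 — 2 statements merged into one kernel-verified Lean document; each statement's English description precedes it below -/
import Mathlib

section
/- Suppose v₀ : ℝ → ℝ is C¹ with v₀'(y) ≥ 0 for all y, and along each characteristic the quantity α(τ) = (g p'(g) J⁻¹ v_y)(y₁(τ;ξ,0), τ) satisfies α(τ) = α(0)/(1 + α(0)∫₀^τ I(g) ds) with α(0) = (g₀ p'(g₀) v₀')(ξ) ≥ 0 and I(g) > 0. Then α(τ) ≥ 0 for all τ ≥ 0, so J⁻¹ v_y ≥ 0 globally and no gradient blow-up occurs. -/
open Set intervalIntegral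

/-- If `α(τ) = α₀ / (1 + α₀ ∫₀^τ I(s) ds)` with `α₀ ≥ 0` and `I > 0`
continuous, then `α(τ) ≥ 0` for all `τ ≥ 0`: no gradient blow-up occurs
for rarefactive data. -/
theorem stmt3 (α₀ : ℝ) (hα₀ : 0 ≤ α₀) (I α : ℝ → ℝ)
    (hI : Continuous I) (hIpos : ∀ s, 0 < I s)
    (hα : ∀ τ : ℝ, α τ = α₀ / (1 + α₀ * ∫ s in (0:ℝ)..τ, I s)) :
    ∀ τ : ℝ, 0 ≤ τ → 0 ≤ α τ := by
  intro τ hτ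
  rw [hα]
  have hint : 0 ≤ ∫ s in (0:ℝ)..τ, I s :=
    integral_nonneg hτ (fun s _ => (hIpos s).le)
  positivity
end

section
/- Suppose gₙ : [0, Tₙ] → ℝ satisfies gₙ(s) ≥ A₁/(1+A₂Bs) with A₁, A₂, B > 0, Tₙ → +∞, and I : (0,∞) → ℝ is nonnegative and increasing with ∫₀^δ I(y)/y² dy = +∞ for some δ > 0. Then ∫₀^{Tₙ} I(gₙ(s)) ds → +∞ as n → ∞. (Consequently the condition 1 + α₀∫₀^{Tₙ} I(g(s))ds = 0 with α₀ < 0 bounded away from 0 forces Tₙ to be bounded.) -/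
open Set Filter intervalIntegral MeasureTheory

/-!
Put `c = A₂B` and `φ(s) = I(A₁/(1 + cs))`. Since `I` is increasing, `I(gₙ(s)) ≥ φ(s)`, so it
suffices that `∫₀^T φ → ∞`. The substitution `y = A₁/(1 + cs)`, for which
`ds = -(A₁/c) dy/y²`, maps `(0, ∞)` onto `(0, A₁)` and turns `φ` into a multiple of `I(y)/y²`.
As `I(y)/y²` is integrable on compact subsets of `(0, ∞)`, it is not integrable on `(0, A₁)`;
hence `φ` is not integrable on `(0, ∞)`, and the integrals over `[0, T]` of a nonnegative
function that is not integrable on `(0, ∞)` are unbounded.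
-/

theorem tendsto_intervalIntegral_atTop_of_not_integrableOn_Ioi {φ : ℝ → ℝ} {a : ℝ}
    (hφ : ∀ x, 0 ≤ φ x) (hint : ∀ b, IntegrableOn φ (Ioc a b))
    (hdiv : ¬ IntegrableOn φ (Ioi a)) :
    Tendsto (fun b => ∫ x in a..b, φ x) atTop atTop := by
  refine tendsto_atTop_atTop.2 fun M => ?_
  by_contra! hbdd
  refine hdiv (integrableOn_Ioi_of_intervalIntegral_norm_bounded M a hint tendsto_id ?_)
  filter_upwards [eventually_ge_atTop a] with b hab
  obtain ⟨b', hbb', hb'⟩ := hbdd b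
  calc ∫ x in a..b, ‖φ x‖ = ∫ x in a..b, φ x := by
        simp only [Real.norm_of_nonneg (hφ _)]
    _ ≤ ∫ x in a..b', φ x :=
        integral_mono_interval le_rfl hab hbb' (Eventually.of_forall hφ)
          ((intervalIntegrable_iff_integrableOn_Ioc_of_le (hab.trans hbb')).2 (hint b'))
    _ ≤ M := hb'.le

section MobiusSubstitution

variable {a c : ℝ} (ha : 0 < a) (hc : 0 < c)
include ha hc

theorem div_one_add_mul_pos {s : ℝ} (hs : 0 ≤ s) : 0 < a / (1 + c * s) := by
  positivity

theorem strictAntiOn_div_one_add_mul : StrictAntiOn (fun s => a / (1 + c * s)) (Ici 0) :=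
  fun s (hs : 0 ≤ s) t _ hst => div_lt_div_of_pos_left ha (by positivity) (by gcongr)

theorem image_div_one_add_mul_Ioi : (fun s => a / (1 + c * s)) '' Ioi 0 = Ioo 0 a := by
  ext y
  constructor
  · rintro ⟨s, hs, rfl⟩
    exact ⟨div_one_add_mul_pos ha hc (le_of_lt hs),
      div_lt_self ha (by simpa using mul_pos hc hs)⟩
  · rintro ⟨hy0, hya⟩
    refine ⟨(a / y - 1) / c, div_pos (by rwa [sub_pos, one_lt_div hy0]) hc, ?_⟩
    field_simp
    ring_nf

theorem hasDerivAt_div_one_add_mul {s : ℝ} (hs : 0 ≤ s) :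
    HasDerivAt (fun s => a / (1 + c * s)) (-(c / a) * (a / (1 + c * s)) ^ 2) s := by
  have hden : 1 + c * s ≠ 0 := by positivity
  have h : HasDerivAt (fun s => 1 + c * s) c s := by
    simpa using ((hasDerivAt_id s).const_mul c).const_add 1
  simpa only [← div_eq_mul_inv] using
    ((h.fun_inv hden).const_mul a).congr_deriv (by field_simp)

theorem integrableOn_comp_div_one_add_mul_Ioi_iff (h : ℝ → ℝ) :
    IntegrableOn (fun s => h (a / (1 + c * s))) (Ioi 0) ↔
      IntegrableOn (fun y => h y / y ^ 2) (Ioo 0 a) := by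
  rw [← image_div_one_add_mul_Ioi ha hc,
    integrableOn_image_iff_integrableOn_abs_deriv_smul measurableSet_Ioi
      (fun s hs => (hasDerivAt_div_one_add_mul ha hc (le_of_lt hs)).hasDerivWithinAt)
      ((strictAntiOn_div_one_add_mul ha hc).injOn.mono Ioi_subset_Ici_self)]
  have hjac : EqOn (fun s => |-(c / a) * (a / (1 + c * s)) ^ 2| •
      (h (a / (1 + c * s)) / (a / (1 + c * s)) ^ 2)) (fun s => c / a * h (a / (1 + c * s)))
      (Ioi 0) := fun s (hs : 0 < s) => by
    have hf := div_one_add_mul_pos ha hc hs.le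
    dsimp only
    rw [smul_eq_mul, abs_mul, abs_neg, abs_of_pos (div_pos hc ha), abs_of_pos (by positivity)]
    field_simp
  rw [integrableOn_congr_fun hjac measurableSet_Ioi]
  exact (integrable_const_mul_iff (div_pos hc ha).ne'.isUnit _).symm

end MobiusSubstitution

theorem MonotoneOn.integrableOn_div_sq_Icc {I : ℝ → ℝ} (hI : MonotoneOn I (Ioi 0)) {a b : ℝ}
    (ha : 0 < a) : IntegrableOn (fun y => I y / y ^ 2) (Icc a b) := by
  have hsub : Icc a b ⊆ Ioi 0 := fun y hy => ha.trans_le hy.1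
  have hcont : ContinuousOn (fun y : ℝ => (y ^ 2)⁻¹) (Icc a b) :=
    (continuousOn_pow 2).inv₀ fun y hy => pow_ne_zero 2 (hsub hy).ne'
  simpa only [div_eq_mul_inv] using
    ((hI.mono hsub).integrableOn_isCompact isCompact_Icc).mul_continuousOn hcont isCompact_Icc

theorem MonotoneOn.not_integrableOn_Ioo_div_sq {I : ℝ → ℝ} (hI : MonotoneOn I (Ioi 0))
    {a δ : ℝ} (ha : 0 < a) (hδ : ¬ IntegrableOn (fun y => I y / y ^ 2) (Ioc 0 δ)) :
    ¬ IntegrableOn (fun y => I y / y ^ 2) (Ioo 0 a) := fun h =>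
  hδ <| (h.union (hI.integrableOn_div_sq_Icc (b := δ) (half_pos ha))).mono_set fun y hy =>
    (lt_or_ge y a).imp (fun hya => ⟨hy.1, hya⟩) fun hay => ⟨by linarith, hy.2⟩

theorem stmt17_general (A₁ A₂ B : ℝ) (hA₁ : 0 < A₁) (hA₂ : 0 < A₂) (hB : 0 < B)
    (g : ℕ → ℝ → ℝ) (T : ℕ → ℝ)
    (hT : Filter.Tendsto T Filter.atTop Filter.atTop)
    (hg : ∀ n, ∀ s ∈ Set.Icc (0:ℝ) (T n), A₁ / (1 + A₂ * B * s) ≤ g n s)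
    (I : ℝ → ℝ) (hInn : ∀ y, 0 ≤ I y) (hImono : MonotoneOn I (Set.Ioi 0))
    (hIdiv : ∃ δ : ℝ, 0 < δ ∧
      ¬ MeasureTheory.IntegrableOn (fun y : ℝ => I y / y ^ 2) (Set.Ioc 0 δ))
    (hint : ∀ n, IntervalIntegrable (fun s => I (g n s))
      MeasureTheory.volume 0 (T n)) :
    Filter.Tendsto (fun n => ∫ s in (0:ℝ)..(T n), I (g n s))
      Filter.atTop Filter.atTop := by
  obtain ⟨δ, -, hδ⟩ := hIdiv
  have hc : 0 < A₂ * B := mul_pos hA₂ hB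
  have hpos := fun s (hs : 0 ≤ s) => div_one_add_mul_pos hA₁ hc hs
  have hφ_anti : AntitoneOn (fun s => I (A₁ / (1 + A₂ * B * s))) (Ici 0) :=
    fun s hs t ht hst => hImono (hpos t ht) (hpos s hs)
      ((strictAntiOn_div_one_add_mul hA₁ hc).antitoneOn hs ht hst)
  have hφ_int (b : ℝ) : IntegrableOn (fun s => I (A₁ / (1 + A₂ * B * s))) (Ioc 0 b) :=
    ((hφ_anti.mono Icc_subset_Ici_self).integrableOn_isCompact isCompact_Icc).mono_set
      Ioc_subset_Icc_self
  have hφ_div : ¬ IntegrableOn (fun s => I (A₁ / (1 + A₂ * B * s))) (Ioi 0) := by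
    rw [integrableOn_comp_div_one_add_mul_Ioi_iff hA₁ hc]
    exact hImono.not_integrableOn_Ioo_div_sq hA₁ hδ
  refine tendsto_atTop_mono' atTop ?_
    ((tendsto_intervalIntegral_atTop_of_not_integrableOn_Ioi (fun s => hInn _) hφ_int
      hφ_div).comp hT)
  filter_upwards [hT.eventually_ge_atTop 0] with n hn
  refine integral_mono_on hn ((intervalIntegrable_iff_integrableOn_Ioc_of_le hn).2 (hφ_int _))
    (hint n) fun s hs => ?_
  exact hImono (hpos s hs.1) ((hpos s hs.1).trans_le (hg n s hs)) (hg n s hs)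

/-- Divergence of the Riccati-coefficient integral: if `gₙ(s) ≥ A₁/(1+A₂Bs)`
on `[0,Tₙ]` with `Tₙ → ∞`, and `I ≥ 0` is increasing on `(0,∞)` with
`∫₀^δ I(y)/y² dy = +∞` (formalized as non-integrability of the nonnegative
integrand), then `∫₀^{Tₙ} I(gₙ(s)) ds → +∞`. -/
theorem stmt17 (A₁ A₂ B : ℝ) (hA₁ : 0 < A₁) (hA₂ : 0 < A₂) (hB : 0 < B)
    (g : ℕ → ℝ → ℝ) (T : ℕ → ℝ)
    (hTpos : ∀ n, 0 < T n)
    (hT : Filter.Tendsto T Filter.atTop Filter.atTop)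
    (hg : ∀ n, ∀ s ∈ Set.Icc (0:ℝ) (T n), A₁ / (1 + A₂ * B * s) ≤ g n s)
    (I : ℝ → ℝ) (hInn : ∀ y, 0 ≤ I y) (hImono : MonotoneOn I (Set.Ioi 0))
    (hIdiv : ∃ δ : ℝ, 0 < δ ∧
      ¬ MeasureTheory.IntegrableOn (fun y : ℝ => I y / y ^ 2) (Set.Ioc 0 δ))
    (hint : ∀ n, IntervalIntegrable (fun s => I (g n s))
      MeasureTheory.volume 0 (T n)) :
    Filter.Tendsto (fun n => ∫ s in (0:ℝ)..(T n), I (g n s))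
      Filter.atTop Filter.atTop :=
  stmt17_general A₁ A₂ B hA₁ hA₂ hB g T hT hg I hInn hImono hIdiv hint
end
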